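/- arXiv:1404.5429 — 7 statements merged into one kernel-verified Lean document; each statement's English description precedes it below -/
import Mathlib

section
/- Let j ≥ 1 be a natural number, let x₀, x₁ ∈ ℂ with x₀ ≠ x₁, and let y₀, y₁, q₀, q₁ ∈ ℂ be nonzero complex numbers with y₁·q₀ ≠ y₀·q₁. Then the set of pairs (a, b) ∈ ℂ × ℂ satisfying both a·y₀·(x₀ − b)^j = q₀ and a·y₁·(x₁ − b)^j = q₁ is finite and has exactly j elements. -/
open Polynomial

/-- The set of `j`-th roots of a nonzero complex number `c` is finite with
exactly `j` elements. -/
lemma aux_roots_card (j : ℕ) (hj : 1 ≤ j) (c : ℂ) (hc : c ≠ 0) :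
    {t : ℂ | t ^ j = c}.Finite ∧ {t : ℂ | t ^ j = c}.ncard = j := by
  have hζ := Complex.isPrimitiveRoot_exp j (by omega)
  have hT : {t : ℂ | t ^ j = c} = ↑(nthRoots j c).toFinset := by
    ext t
    simp [Polynomial.mem_nthRoots (show 0 < j by omega)]
  refine ⟨hT ▸ (nthRoots j c).toFinset.finite_toSet, ?_⟩
  rw [hT, Set.ncard_coe_finset,
    Multiset.toFinset_card_of_nodup (hζ.nthRoots_nodup hc),
    hζ.card_nthRoots c, if_pos (IsAlgClosed.exists_pow_nat_eq c (by omega))]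

/-- The system `a·y₀·(x₀ - b)^j = q₀`, `a·y₁·(x₁ - b)^j = q₁` has exactly `j`
solutions `(a, b) ∈ ℂ × ℂ` when `j ≥ 1`, `x₀ ≠ x₁`, `y₀, y₁, q₀, q₁` are
nonzero, and `y₁·q₀ ≠ y₀·q₁`. -/
theorem solution_count_two_point_constraints
    (j : ℕ) (hj : 1 ≤ j) (x₀ x₁ : ℂ) (hx : x₀ ≠ x₁)
    (y₀ y₁ q₀ q₁ : ℂ) (hy₀ : y₀ ≠ 0) (hy₁ : y₁ ≠ 0) (hq₀ : q₀ ≠ 0) (hq₁ : q₁ ≠ 0)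
    (h : y₁ * q₀ ≠ y₀ * q₁) :
    {p : ℂ × ℂ | p.1 * y₀ * (x₀ - p.2) ^ j = q₀ ∧ p.1 * y₁ * (x₁ - p.2) ^ j = q₁}.Finite ∧
      {p : ℂ × ℂ | p.1 * y₀ * (x₀ - p.2) ^ j = q₀ ∧ p.1 * y₁ * (x₁ - p.2) ^ j = q₁}.ncard = j := by
  set c : ℂ := y₁ * q₀ / (y₀ * q₁) with hc_def
  have hc0 : c ≠ 0 := div_ne_zero (mul_ne_zero hy₁ hq₀) (mul_ne_zero hy₀ hq₁)
  have hc1 : c ≠ 1 := by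
    intro hc
    apply h
    rw [hc_def, div_eq_one_iff_eq (mul_ne_zero hy₀ hq₁)] at hc
    exact hc
  obtain ⟨hTfin, hTcard⟩ := aux_roots_card j hj c hc0
  set T : Set ℂ := {t : ℂ | t ^ j = c} with hT_def
  -- the parametrization of solutions by `j`-th roots of `c`
  set bf : ℂ → ℂ := fun t => (x₀ - t * x₁) / (1 - t) with hbf_def
  set g : ℂ → ℂ × ℂ := fun t => (q₀ / (y₀ * (x₀ - bf t) ^ j), bf t) with hg_def
  have key : ∀ t ∈ T, t ≠ 0 ∧ t ≠ 1 ∧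
      x₀ - bf t = t * (x₁ - x₀) / (1 - t) ∧ x₁ - bf t = (x₁ - x₀) / (1 - t) := by
    intro t ht
    have ht0 : t ≠ 0 := by rintro rfl; simp [hT_def, zero_pow (show j ≠ 0 by omega)] at ht; exact hc0 ht.symm
    have ht1 : t ≠ 1 := by rintro rfl; simp [hT_def] at ht; exact hc1 ht.symm
    have h1t : (1 : ℂ) - t ≠ 0 := sub_ne_zero.mpr (Ne.symm ht1)
    refine ⟨ht0, ht1, ?_, ?_⟩ <;> simp only [hbf_def] <;> field_simp <;> ring
  have hx' : x₁ - x₀ ≠ 0 := sub_ne_zero.mpr (Ne.symm hx)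
  have hSeq : {p : ℂ × ℂ | p.1 * y₀ * (x₀ - p.2) ^ j = q₀ ∧ p.1 * y₁ * (x₁ - p.2) ^ j = q₁}
      = g '' T := by
    ext ⟨a, b⟩
    simp only [Set.mem_setOf_eq, Set.mem_image]
    constructor
    · rintro ⟨h0, h1⟩
      have ha : a ≠ 0 := by rintro rfl; simp at h0; exact hq₀ h0.symm
      have hb0 : x₀ - b ≠ 0 := by
        intro hb; rw [hb, zero_pow (show j ≠ 0 by omega), mul_zero] at h0; exact hq₀ h0.symm
      have hb1 : x₁ - b ≠ 0 := by
        intro hb; rw [hb, zero_pow (show j ≠ 0 by omega), mul_zero] at h1; exact hq₁ h1.symm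
      refine ⟨(x₀ - b) / (x₁ - b), ?_, ?_⟩
      · show ((x₀ - b) / (x₁ - b)) ^ j = c
        rw [div_pow, hc_def]
        rw [div_eq_div_iff (pow_ne_zero _ hb1) (mul_ne_zero hy₀ hq₁)]
        linear_combination (y₁ * (x₁ - b) ^ j) * h0 - (y₀ * (x₀ - b) ^ j) * h1
      · have hbfeq : bf ((x₀ - b) / (x₁ - b)) = b := by
          have hden : (1 : ℂ) - (x₀ - b) / (x₁ - b) ≠ 0 := by
            rw [sub_ne_zero]
            intro heq
            have := (div_eq_one_iff_eq hb1).mp heq.symm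
            exact hx (sub_left_inj.mp this)
          simp only [hbf_def]
          rw [div_eq_iff hden]
          field_simp
          ring
        have ha' : q₀ / (y₀ * (x₀ - b) ^ j) = a := by
          rw [div_eq_iff (mul_ne_zero hy₀ (pow_ne_zero _ hb0))]
          linear_combination -h0
        show (q₀ / (y₀ * (x₀ - bf ((x₀ - b) / (x₁ - b))) ^ j), bf ((x₀ - b) / (x₁ - b))) = (a, b)
        rw [hbfeq, ha']
    · rintro ⟨t, ht, heq⟩
      obtain ⟨rfl, rfl⟩ : a = q₀ / (y₀ * (x₀ - bf t) ^ j) ∧ b = bf t :=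
        ⟨(congrArg Prod.fst heq).symm, (congrArg Prod.snd heq).symm⟩
      obtain ⟨ht0, ht1, e0, e1⟩ := key t ht
      have h1t : (1 : ℂ) - t ≠ 0 := sub_ne_zero.mpr (Ne.symm ht1)
      have hb0 : x₀ - bf t ≠ 0 := by
        rw [e0]; exact div_ne_zero (mul_ne_zero ht0 hx') h1t
      have hb1 : x₁ - bf t ≠ 0 := by
        rw [e1]; exact div_ne_zero hx' h1t
      have htj : t ^ j = c := ht
      constructor
      · show q₀ / (y₀ * (x₀ - bf t) ^ j) * y₀ * (x₀ - bf t) ^ j = q₀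
        field_simp
      · show q₀ / (y₀ * (x₀ - bf t) ^ j) * y₁ * (x₁ - bf t) ^ j = q₁
        have hratio : (x₀ - bf t) ^ j = t ^ j * (x₁ - bf t) ^ j := by
          rw [e0, e1, ← mul_pow]; congr 1; field_simp
        rw [hratio, htj]
        have hX : (x₁ - bf t) ^ j ≠ 0 := pow_ne_zero _ hb1
        field_simp [hc_def]
        rw [hc_def]; field_simp
  have hinj : Set.InjOn g T := by
    intro t ht t' ht' hgt
    obtain ⟨_, ht1, _, _⟩ := key t ht
    obtain ⟨_, ht1', _, _⟩ := key t' ht'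
    have h1t : (1 : ℂ) - t ≠ 0 := sub_ne_zero.mpr (Ne.symm ht1)
    have h1t' : (1 : ℂ) - t' ≠ 0 := sub_ne_zero.mpr (Ne.symm ht1')
    have hbeq : bf t = bf t' := congrArg Prod.snd hgt
    simp only [hbf_def] at hbeq
    rw [div_eq_div_iff h1t h1t'] at hbeq
    have : (t - t') * (x₁ - x₀) = 0 := by linear_combination -hbeq
    rcases mul_eq_zero.mp this with h' | h'
    · exact sub_eq_zero.mp h'
    · exact absurd h' hx'
  constructor
  · rw [hSeq]; exact hTfin.image g
  · rw [hSeq, Set.ncard_image_of_injOn hinj, hTcard]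
end

section
/- Let x₀ ∈ ℂ with Im(x₀) ≠ 0, let j ≥ 1 be a natural number, and let c ∈ ℂ with |c| = 1 and c ≠ 1. Then every b ∈ ℂ satisfying (x₀ − b)^j = c·(conj(x₀) − b)^j is a real number (i.e. Im(b) = 0), and the set of such b is finite with exactly j elements. -/
open Complex Polynomial

/-- If `Im x₀ ≠ 0`, `j ≥ 1`, `|c| = 1` and `c ≠ 1`, then every solution `b` of
`(x₀ - b)^j = c·(conj x₀ - b)^j` is real, and there are exactly `j` solutions. -/
theorem real_solutions_of_unit_modulus
    (x₀ : ℂ) (hx : x₀.im ≠ 0) (j : ℕ) (hj : 1 ≤ j)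
    (c : ℂ) (hc : ‖c‖ = 1) (hc1 : c ≠ 1) :
    (∀ b : ℂ, (x₀ - b) ^ j = c * ((starRingEnd ℂ) x₀ - b) ^ j → b.im = 0) ∧
      {b : ℂ | (x₀ - b) ^ j = c * ((starRingEnd ℂ) x₀ - b) ^ j}.Finite ∧
      {b : ℂ | (x₀ - b) ^ j = c * ((starRingEnd ℂ) x₀ - b) ^ j}.ncard = j := by
  have hj0 : j ≠ 0 := by omega
  have hjpos : 0 < j := hj
  have hc0 : c ≠ 0 := by
    intro h; rw [h] at hc; simp at hc
  have hconj : (starRingEnd ℂ) x₀ ≠ x₀ := by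
    intro h
    apply hx
    have := congrArg Complex.im h
    simp [Complex.conj_im] at this
    linarith
  have hxdiff : x₀ - (starRingEnd ℂ) x₀ ≠ 0 := sub_ne_zero.mpr (fun h => hconj h.symm)
  set S := {b : ℂ | (x₀ - b) ^ j = c * ((starRingEnd ℂ) x₀ - b) ^ j} with hSdef
  -- Part 1: all solutions are real
  have hreal : ∀ b : ℂ, (x₀ - b) ^ j = c * ((starRingEnd ℂ) x₀ - b) ^ j → b.im = 0 := by
    intro b hb
    have h1 : ‖x₀ - b‖ ^ j = ‖(starRingEnd ℂ) x₀ - b‖ ^ j := by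
      rw [← norm_pow, ← norm_pow, hb, norm_mul, hc, one_mul]
    have habs : ‖x₀ - b‖ = ‖(starRingEnd ℂ) x₀ - b‖ := by
      exact (pow_left_inj₀ (norm_nonneg _) (norm_nonneg _) hj0).mp h1
    have hsq : Complex.normSq (x₀ - b) = Complex.normSq ((starRingEnd ℂ) x₀ - b) := by
      rw [← Complex.sq_norm, ← Complex.sq_norm, habs]
    simp only [Complex.normSq_apply, Complex.sub_re, Complex.sub_im, Complex.conj_re,
      Complex.conj_im] at hsq
    have : x₀.im * b.im = 0 := by nlinarith [hsq]
    rcases mul_eq_zero.mp this with h | h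
    · exact absurd h hx
    · exact h
  refine ⟨hreal, ?_⟩
  -- The set of j-th roots of c
  set R := {z : ℂ | z ^ j = c} with hRdef
  obtain ⟨α, hα⟩ := IsAlgClosed.exists_pow_nat_eq c hjpos
  have hprim := Complex.isPrimitiveRoot_exp j hj0
  have hRfin : R = ↑((nthRoots j c).toFinset) := by
    ext z
    simp [hRdef, Polynomial.mem_nthRoots hjpos]
  have hRcard : R.ncard = j := by
    rw [hRfin, Set.ncard_coe_finset,
      Multiset.toFinset_card_of_nodup (hprim.nthRoots_nodup hc0),
      hprim.card_nthRoots c, if_pos ⟨α, hα⟩]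
  have hRfinite : R.Finite := by rw [hRfin]; exact Finset.finite_toSet _
  -- the parametrization
  set f : ℂ → ℂ := fun z => (z * (starRingEnd ℂ) x₀ - x₀) / (z - 1) with hfdef
  have hz1 : ∀ z ∈ R, z - 1 ≠ 0 := by
    intro z hz h
    have : z = 1 := by linear_combination h
    apply hc1
    rw [← hz, this, one_pow]
  have hkey : ∀ z ∈ R, x₀ - f z = z * ((starRingEnd ℂ) x₀ - f z) ∧
      (starRingEnd ℂ) x₀ - f z ≠ 0 := by
    intro z hz
    have h1 := hz1 z hz
    constructor
    · simp only [hfdef]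
      field_simp
      ring
    · have : (starRingEnd ℂ) x₀ - f z = (x₀ - (starRingEnd ℂ) x₀) / (z - 1) := by
        simp only [hfdef]
        field_simp
        ring
      rw [this]
      exact div_ne_zero hxdiff h1
  have hSR : S = f '' R := by
    ext b
    constructor
    · intro hb
      simp only [hSdef, Set.mem_setOf_eq] at hb
      have hd : (starRingEnd ℂ) x₀ - b ≠ 0 := by
        intro h
        rw [h, zero_pow hj0, mul_zero, pow_eq_zero_iff hj0, sub_eq_zero] at hb
        exact hconj ((sub_eq_zero.mp h).trans hb.symm)
      set z := (x₀ - b) / ((starRingEnd ℂ) x₀ - b) with hzdef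
      have hzR : z ∈ R := by
        simp only [hRdef, Set.mem_setOf_eq, hzdef, div_pow]
        rw [hb]
        field_simp
      refine ⟨z, hzR, ?_⟩
      have hz1' := hz1 z hzR
      simp only [hfdef]
      rw [div_eq_iff hz1']
      rw [hzdef]
      field_simp
      ring
    · rintro ⟨z, hz, rfl⟩
      obtain ⟨heq, _⟩ := hkey z hz
      simp only [hSdef, Set.mem_setOf_eq, heq, mul_pow]
      rw [hz]
  have hinj : Set.InjOn f R := by
    intro z₁ h₁ z₂ h₂ hf
    have e₁ := hz1 z₁ h₁
    have e₂ := hz1 z₂ h₂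
    rw [hfdef] at hf
    simp only at hf
    rw [div_eq_div_iff e₁ e₂] at hf
    have : (z₁ - z₂) * ((starRingEnd ℂ) x₀ - x₀) = 0 := by linear_combination -hf
    rcases mul_eq_zero.mp this with h | h
    · linear_combination h
    · exact absurd (sub_eq_zero.mp h) hconj
  rw [hSR]
  exact ⟨hRfinite.image f, by rw [Set.ncard_image_of_injOn hinj, hRcard]⟩
end

section
/- Let x₀ ∈ ℂ with Im(x₀) ≠ 0, let j ≥ 1 be a natural number, and let θ ∈ ℝ with exp(i·j·θ) ≠ 1. For k = 0, …, j−1 set ω_k = exp(i(θ + 2kπ/j)) and b_k = (x₀ − conj(x₀)·ω_k)/(1 − ω_k). Then each ω_k ≠ 1, each b_k is a real number, the numbers b_0, …, b_{j−1} are pairwise distinct, and the solution set {b ∈ ℂ : (x₀ − b)^j = exp(i·j·θ)·(conj(x₀) − b)^j} equals {b_0, …, b_{j−1}}. -/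
/-- For `Im x₀ ≠ 0`, `j ≥ 1` and `θ ∈ ℝ` with `exp(i·j·θ) ≠ 1`, the `j` numbers
`b_k = (x₀ - conj x₀ · ω_k)/(1 - ω_k)`, where `ω_k = exp(i(θ + 2kπ/j))`,
are real, pairwise distinct, and form exactly the solution set of
`(x₀ - b)^j = exp(i·j·θ)·(conj x₀ - b)^j`. -/
theorem explicit_real_solutions
    (x₀ : ℂ) (hx : x₀.im ≠ 0) (j : ℕ) (hj : 1 ≤ j) (θ : ℝ)
    (hθ : Complex.exp (Complex.I * (j : ℂ) * (θ : ℂ)) ≠ 1)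
    (ω : ℕ → ℂ)
    (hω : ∀ k : ℕ, ω k = Complex.exp (Complex.I * ((θ + 2 * k * Real.pi / j : ℝ) : ℂ)))
    (b : ℕ → ℂ)
    (hb : ∀ k : ℕ, b k = (x₀ - (starRingEnd ℂ) x₀ * ω k) / (1 - ω k)) :
    (∀ k < j, ω k ≠ 1) ∧
      (∀ k < j, (b k).im = 0) ∧
      (∀ k < j, ∀ k' < j, b k = b k' → k = k') ∧
      {z : ℂ | (x₀ - z) ^ j =
          Complex.exp (Complex.I * (j : ℂ) * (θ : ℂ)) * ((starRingEnd ℂ) x₀ - z) ^ j}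
        = b '' Set.Iio j := by
  have hj0 : (j : ℂ) ≠ 0 := Nat.cast_ne_zero.mpr (by omega)
  have hjR : (j : ℝ) ≠ 0 := Nat.cast_ne_zero.mpr (by omega)
  set c := Complex.exp (Complex.I * (j : ℂ) * (θ : ℂ)) with hc
  have hc0 : c ≠ 0 := Complex.exp_ne_zero _
  -- ω k ^ j = c for every k
  have hpow : ∀ k : ℕ, ω k ^ j = c := by
    intro k
    rw [hω k, ← Complex.exp_nat_mul, hc,
      show ((j : ℂ) * (Complex.I * ((θ + 2 * k * Real.pi / j : ℝ) : ℂ)))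
          = Complex.I * (j : ℂ) * (θ : ℂ) + (k : ℤ) * (2 * (Real.pi : ℂ) * Complex.I) by
        push_cast
        field_simp,
      Complex.exp_add, Complex.exp_int_mul_two_pi_mul_I, mul_one]
  have hω1 : ∀ k : ℕ, ω k ≠ 1 := by
    intro k h
    exact hθ (by rw [← hpow k, h, one_pow])
  have hω0 : ∀ k : ℕ, ω k ≠ 0 := by
    intro k; rw [hω k]; exact Complex.exp_ne_zero _
  have hden : ∀ k : ℕ, 1 - ω k ≠ 0 := fun k => sub_ne_zero.mpr (Ne.symm (hω1 k))
  have hconjx : (starRingEnd ℂ) x₀ - x₀ ≠ 0 :=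
    sub_ne_zero.mpr fun h => hx (Complex.conj_eq_iff_im.mp h)
  have hkey : ∀ k : ℕ, x₀ - b k = ω k * ((starRingEnd ℂ) x₀ - b k) := by
    intro k
    rw [hb k]
    field_simp [hden k]
    ring
  have hval : ∀ k : ℕ, (starRingEnd ℂ) x₀ - b k = ((starRingEnd ℂ) x₀ - x₀) / (1 - ω k) := by
    intro k
    rw [hb k, eq_div_iff (hden k)]
    field_simp [hden k]
    ring
  have hne : ∀ k : ℕ, (starRingEnd ℂ) x₀ - b k ≠ 0 := by
    intro k
    rw [hval k]
    exact div_ne_zero hconjx (hden k)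
  -- conjugate of ω
  have hcω : ∀ k : ℕ, (starRingEnd ℂ) (ω k) = (ω k)⁻¹ := by
    intro k
    rw [hω k, ← Complex.exp_conj, ← Complex.exp_neg]
    congr 1
    rw [map_mul, Complex.conj_I, Complex.conj_ofReal]
    ring
  -- b k is real
  have hreal : ∀ k : ℕ, (b k).im = 0 := by
    intro k
    rw [← Complex.conj_eq_iff_im]
    rw [hb k, map_div₀, map_sub, map_sub, map_mul, Complex.conj_conj, map_one, hcω k]
    rw [div_eq_div_iff (by
        rw [sub_ne_zero]
        intro h
        exact hω1 k (by rw [← inv_inv (ω k), ← h, inv_one]) ) (hden k)]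
    field_simp [hω0 k]
    ring
  -- injectivity of ω on [0, j)
  have hωinj : ∀ k < j, ∀ k' < j, ω k = ω k' → k = k' := by
    intro k hk k' hk' h
    rw [hω k, hω k', Complex.exp_eq_exp_iff_exists_int] at h
    obtain ⟨n, hn⟩ := h
    have hn' : Complex.I * ((θ + 2 * k * Real.pi / j : ℝ) : ℂ)
        = Complex.I * (((θ + 2 * k' * Real.pi / j : ℝ) : ℂ) + (n : ℂ) * (2 * (Real.pi : ℂ))) := by
      rw [hn]; ring
    have h2 := mul_left_cancel₀ Complex.I_ne_zero hn'
    have h3 : θ + 2 * (k : ℝ) * Real.pi / j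
        = (θ + 2 * (k' : ℝ) * Real.pi / j) + (n : ℝ) * (2 * Real.pi) := by
      exact_mod_cast h2
    have h5 : (2 * Real.pi) * ((k : ℝ) - (k' : ℝ) - (n : ℝ) * (j : ℝ)) = 0 := by
      have h6 : 2 * (k : ℝ) * Real.pi / j = 2 * (k' : ℝ) * Real.pi / j + (n : ℝ) * (2 * Real.pi) := by
        linarith
      field_simp at h6
      rw [h6]; ring
    have h7 : (k : ℝ) - (k' : ℝ) - (n : ℝ) * (j : ℝ) = 0 := by
      rcases mul_eq_zero.mp h5 with h | h
      · nlinarith [Real.pi_pos]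
      · exact h
    have h8 : (k : ℤ) - (k' : ℤ) = (j : ℤ) * n := by
      have : (k : ℝ) = (k' : ℝ) + (n : ℝ) * (j : ℝ) := by linarith
      have h9 : (k : ℤ) = (k' : ℤ) + n * (j : ℤ) := by exact_mod_cast this
      linarith
    have hdvd : (j : ℤ) ∣ (k : ℤ) - (k' : ℤ) := ⟨n, h8⟩
    have habs : |(k : ℤ) - (k' : ℤ)| < (j : ℤ) := by
      rw [abs_lt]; constructor <;> [omega; omega]
    have := Int.eq_zero_of_abs_lt_dvd hdvd habs
    omega
  refine ⟨fun k _ => hω1 k, fun k _ => hreal k, ?_, ?_⟩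
  · -- pairwise distinct
    intro k hk k' hk' heq
    apply hωinj k hk k' hk'
    have h1 : ω k * ((starRingEnd ℂ) x₀ - b k) = ω k' * ((starRingEnd ℂ) x₀ - b k) := by
      rw [← hkey k]
      nth_rewrite 2 [heq]
      rw [heq, hkey k']
    exact mul_right_cancel₀ (hne k) h1
  · -- the solution set
    ext z
    simp only [Set.mem_setOf_eq, Set.mem_image, Set.mem_Iio]
    constructor
    · intro hz
      have hzne : (starRingEnd ℂ) x₀ - z ≠ 0 := by
        intro h0
        rw [h0, zero_pow (by omega), mul_zero] at hz
        have h1 : x₀ - z = 0 := pow_eq_zero_iff (by omega) |>.mp hz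
        apply hconjx
        rw [sub_eq_zero] at h0 h1 ⊢
        rw [h0, h1]
      set w := (x₀ - z) / ((starRingEnd ℂ) x₀ - z) with hw
      have hwz : x₀ - z = w * ((starRingEnd ℂ) x₀ - z) := (div_mul_cancel₀ _ hzne).symm
      have hwj : w ^ j = c := by
        rw [hw, div_pow, hz, mul_div_assoc, div_self (pow_ne_zero _ hzne), mul_one]
      have hroot : (w / ω 0) ^ j = 1 := by
        rw [div_pow, hwj, hpow 0, div_self hc0]
      have : NeZero j := ⟨by omega⟩
      obtain ⟨i, hi, hie⟩ :=
        (Complex.isPrimitiveRoot_exp j (by omega)).eq_pow_of_pow_eq_one hroot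
      have hωi : ω i = ω 0 * Complex.exp (2 * Real.pi * Complex.I / j) ^ i := by
        rw [hω i, hω 0, ← Complex.exp_nat_mul, ← Complex.exp_add]
        congr 1
        push_cast
        field_simp
        ring
      have hwω : w = ω i := by
        rw [hωi, hie, mul_comm]
        exact (div_mul_cancel₀ w (hω0 0)).symm
      refine ⟨i, hi, ?_⟩
      have h1 : x₀ - z = ω i * ((starRingEnd ℂ) x₀ - z) := by rw [← hwω]; exact hwz
      have h2 := hkey i
      have h3 : (1 - ω i) * (b i - z) = 0 := by linear_combination h1 - h2
      rcases mul_eq_zero.mp h3 with h | h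
      · exact absurd h (hden i)
      · exact sub_eq_zero.mp h
    · rintro ⟨k, hk, rfl⟩
      rw [hkey k, mul_pow, hpow k]
end

section
/- Let x₀ ∈ ℂ, θ ∈ ℝ, let j ≥ 1 be a natural number and k a natural number. Set φ = θ + 2kπ/j and suppose sin(φ/2) ≠ 0 (so in particular exp(iφ) ≠ 1). Let b = (x₀ − conj(x₀)·exp(iφ))/(1 − exp(iφ)). Then (x₀ − b)^j = (−1)^k · exp(i·j·θ/2) · (Im(x₀)/sin(θ/2 + kπ/j))^j, where the real number Im(x₀)/sin(θ/2 + kπ/j) is raised to the j-th power and viewed as a complex number. -/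
open Complex


/-- Explicit computation of `(x₀ - b)^j` for the solution
`b = (x₀ - conj x₀ · exp(iφ))/(1 - exp(iφ))`, `φ = θ + 2kπ/j`:
`(x₀ - b)^j = (-1)^k · exp(i·j·θ/2) · (Im x₀ / sin(θ/2 + kπ/j))^j`. -/
theorem pow_x0_sub_b_eq
    (x₀ : ℂ) (θ : ℝ) (j : ℕ) (hj : 1 ≤ j) (k : ℕ)
    (hsin : Real.sin ((θ + 2 * k * Real.pi / j) / 2) ≠ 0)
    (b : ℂ)
    (hb : b = (x₀ - (starRingEnd ℂ) x₀ *
          Complex.exp (Complex.I * ((θ + 2 * k * Real.pi / j : ℝ) : ℂ))) /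
        (1 - Complex.exp (Complex.I * ((θ + 2 * k * Real.pi / j : ℝ) : ℂ)))) :
    (x₀ - b) ^ j = (-1) ^ k * Complex.exp (Complex.I * (j : ℂ) * (θ : ℂ) / 2) *
      (((x₀.im / Real.sin (θ / 2 + k * Real.pi / j) : ℝ) : ℂ)) ^ j := by

  have hj0 : (j : ℝ) ≠ 0 := Nat.cast_ne_zero.mpr (by omega)
  set φ : ℝ := θ + 2 * k * Real.pi / j with hφ
  set ψ : ℝ := φ / 2 with hψdef
  have hψ : ψ = θ / 2 + k * Real.pi / j := by
    rw [hψdef, hφ]; field_simp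
  have hsinC : ((Real.sin ψ : ℝ) : ℂ) ≠ 0 := by exact_mod_cast hsin
  have h2 : Complex.exp (I * (φ : ℂ)) = Complex.exp (I * ψ) * Complex.exp (I * ψ) := by
    rw [← Complex.exp_add]; congr 1
    rw [hψdef]; push_cast; ring
  have h3' : Complex.exp (I * ψ) * Complex.exp (-((ψ : ℂ) * I)) = 1 := by
    rw [← Complex.exp_add, show I * (ψ:ℂ) + -((ψ:ℂ) * I) = 0 by ring, Complex.exp_zero]
  have h5 : Complex.exp ((ψ : ℂ) * I) = Complex.exp (I * ψ) := by rw [mul_comm]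
  have h6 : Complex.exp (-(ψ:ℂ) * I) = Complex.exp (-((ψ:ℂ) * I)) := by rw [neg_mul]
  have key : (1 : ℂ) - Complex.exp (I * (φ : ℂ)) = -(2 * I * Real.sin ψ * Complex.exp (I * ψ)) := by
    rw [h2, Complex.ofReal_sin, Complex.sin]
    linear_combination (-1 : ℂ) * h3' + Complex.exp (I * (ψ:ℂ)) * h5 +
      (Complex.exp (-((ψ:ℂ) * I)) * Complex.exp (I * (ψ:ℂ)) -
        Complex.exp ((ψ:ℂ) * I) * Complex.exp (I * (ψ:ℂ))) * I_sq +
      Complex.exp (I * (ψ:ℂ)) * I ^ 2 * h6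
  have hexpne : Complex.exp (I * ψ) ≠ 0 := Complex.exp_ne_zero _
  have hden : (1 : ℂ) - Complex.exp (I * (φ : ℂ)) ≠ 0 := by
    rw [key]; simp only [neg_ne_zero]
    exact mul_ne_zero (mul_ne_zero (mul_ne_zero two_ne_zero I_ne_zero) hsinC) hexpne
  have hconj : x₀ - (starRingEnd ℂ) x₀ = 2 * (x₀.im : ℂ) * I := by
    have := Complex.sub_conj x₀; push_cast at this; exact this
  have hxb : x₀ - b = Complex.exp (I * ψ) * ((x₀.im / Real.sin ψ : ℝ) : ℂ) := by
    have step : x₀ - b = -((x₀ - (starRingEnd ℂ) x₀) * Complex.exp (I * (φ : ℂ))) /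
        (1 - Complex.exp (I * (φ : ℂ))) := by
      rw [hb]; field_simp; ring
    have hne : -(2 * I * ((Real.sin ψ : ℝ) : ℂ) * Complex.exp (I * ψ)) ≠ 0 := by
      simpa [key] using hden
    rw [step, hconj, key, h2, div_eq_iff hne, Complex.ofReal_div x₀.im (Real.sin ψ),
      ← mul_div_assoc, div_mul_eq_mul_div, eq_div_iff hsinC]
    ring
  rw [hxb, mul_pow, ← Complex.exp_nat_mul]
  have harg : (j : ℂ) * (I * (ψ : ℂ)) = I * (j : ℂ) * (θ : ℂ) / 2 + (k : ℂ) * Real.pi * I := by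
    have h : (j : ℝ) * ψ = (j : ℝ) * θ / 2 + k * Real.pi := by
      rw [hψ]; field_simp
    have h2 := congrArg (fun r : ℝ => I * (r : ℂ)) h
    push_cast at h2 ⊢
    linear_combination h2
  have hk : Complex.exp ((k : ℂ) * Real.pi * I) = (-1 : ℂ) ^ k := by
    rw [show ((k:ℂ) * Real.pi * I) = (k:ℕ) * ((Real.pi:ℂ) * I) by ring,
      Complex.exp_nat_mul, Complex.exp_pi_mul_I]
  rw [harg, Complex.exp_add, hk, hψ]
  ring
end

section
/- Let x₀ ∈ ℂ with Im(x₀) ≠ 0, let j ≥ 2 be an even natural number, let θ ∈ ℝ, and let k, k' be natural numbers with sin(θ/2 + kπ/j) ≠ 0 and sin(θ/2 + k'π/j) ≠ 0. For m ∈ {k, k'} set ω_m = exp(i(θ + 2mπ/j)) and b_m = (x₀ − conj(x₀)·ω_m)/(1 − ω_m). Then there exists a real number r > 0 such that (x₀ − b_k)^j = (−1)^{k+k'} · r · (x₀ − b_{k'})^j. -/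
open Complex in
/-- Key computation: `x₀ - b m` in polar-like form. -/
lemma sign_alternation_key
    (x₀ : ℂ) (j : ℕ) (hj0 : (j : ℝ) ≠ 0) (θ : ℝ) (m : ℕ)
    (hm : Real.sin (θ / 2 + m * Real.pi / j) ≠ 0)
    (ω : ℕ → ℂ)
    (hω : ∀ m : ℕ, ω m = Complex.exp (Complex.I * ((θ + 2 * m * Real.pi / j : ℝ) : ℂ)))
    (b : ℕ → ℂ)
    (hb : ∀ m : ℕ, b m = (x₀ - (starRingEnd ℂ) x₀ * ω m) / (1 - ω m)) :
    x₀ - b m = ((x₀.im / Real.sin (θ / 2 + m * Real.pi / j) : ℝ) : ℂ) *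
      Complex.exp (((θ / 2 + m * Real.pi / j : ℝ) : ℂ) * Complex.I) := by
  set ψ : ℝ := θ / 2 + m * Real.pi / j with hψ
  set E : ℂ := Complex.exp ((ψ : ℂ) * Complex.I) with hE
  have hE0 : E ≠ 0 := Complex.exp_ne_zero _
  have hEsq : ω m = E ^ 2 := by
    rw [hω, hE, ← Complex.exp_nat_mul]
    congr 1
    have h2 : (θ + 2 * m * Real.pi / j : ℝ) = 2 * ψ := by
      rw [hψ]; field_simp
    rw [h2]
    push_cast
    ring
  have hEc : E = Complex.cos ψ + Complex.sin ψ * Complex.I := by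
    rw [hE, Complex.exp_mul_I]
  have hA : Complex.exp (-(ψ : ℂ) * Complex.I) =
      Complex.cos ψ - Complex.sin ψ * Complex.I := by
    rw [Complex.exp_mul_I, Complex.cos_neg, Complex.sin_neg]; ring
  have hsin : Complex.exp (-(ψ : ℂ) * Complex.I) - E =
      -2 * Complex.I * ((Real.sin ψ : ℝ) : ℂ) := by
    rw [hA, hEc, Complex.ofReal_sin]; ring
  have h1ω : 1 - ω m = E * (-2 * Complex.I * ((Real.sin ψ : ℝ) : ℂ)) := by
    rw [hEsq, ← hsin]
    have h1 : E * Complex.exp (-(ψ : ℂ) * Complex.I) = 1 := by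
      rw [hE, ← Complex.exp_add]; simp
    rw [mul_sub, h1]
    ring
  have hs : ((Real.sin ψ : ℝ) : ℂ) ≠ 0 := Complex.ofReal_ne_zero.mpr hm
  have hne : E * (-2 * Complex.I * ((Real.sin ψ : ℝ) : ℂ)) ≠ 0 :=
    mul_ne_zero hE0 (mul_ne_zero (by simp [Complex.I_ne_zero]) hs)
  have hω1 : 1 - ω m ≠ 0 := by rw [h1ω]; exact hne
  have hsub : x₀ - b m = ((starRingEnd ℂ) x₀ - x₀) * ω m / (1 - ω m) := by
    rw [hb]
    field_simp
    ring
  have hconj : (starRingEnd ℂ) x₀ - x₀ = -(2 * x₀.im * Complex.I) := by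
    have h := Complex.sub_conj x₀
    push_cast at h
    linear_combination -h
  rw [hsub, hconj, h1ω, hEsq]
  rw [div_eq_iff hne, Complex.ofReal_div]
  have key : (x₀.im : ℂ) / ((Real.sin ψ : ℝ) : ℂ) * ((Real.sin ψ : ℝ) : ℂ) = (x₀.im : ℂ) :=
    div_mul_cancel₀ _ hs
  linear_combination (2 * Complex.I * E ^ 2) * key

/-- Sign alternation: for even `j ≥ 2`, the quantities `(x₀ - b_k)^j` for the
explicit solutions `b_k` differ by a positive real multiple times `(-1)^{k+k'}`. -/
theorem sign_alternation
    (x₀ : ℂ) (hx : x₀.im ≠ 0) (j : ℕ) (hj : 2 ≤ j) (hje : Even j)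
    (θ : ℝ) (k k' : ℕ)
    (hk : Real.sin (θ / 2 + k * Real.pi / j) ≠ 0)
    (hk' : Real.sin (θ / 2 + k' * Real.pi / j) ≠ 0)
    (ω : ℕ → ℂ)
    (hω : ∀ m : ℕ, ω m = Complex.exp (Complex.I * ((θ + 2 * m * Real.pi / j : ℝ) : ℂ)))
    (b : ℕ → ℂ)
    (hb : ∀ m : ℕ, b m = (x₀ - (starRingEnd ℂ) x₀ * ω m) / (1 - ω m)) :
    ∃ r : ℝ, 0 < r ∧ (x₀ - b k) ^ j = (-1) ^ (k + k') * (r : ℂ) * (x₀ - b k') ^ j := by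
  have hj0 : (j : ℝ) ≠ 0 := by
    have : 0 < j := lt_of_lt_of_le (by norm_num) hj
    exact_mod_cast this.ne'
  -- powers
  have pow_eq : ∀ m : ℕ, Real.sin (θ / 2 + m * Real.pi / j) ≠ 0 →
      (x₀ - b m) ^ j = (((x₀.im / Real.sin (θ / 2 + m * Real.pi / j)) ^ j : ℝ) : ℂ) *
        (-1) ^ m * Complex.exp (((j * (θ / 2) : ℝ) : ℂ) * Complex.I) := by
    intro m hm
    rw [sign_alternation_key x₀ j hj0 θ m hm ω hω b hb, mul_pow]
    have hEj : (Complex.exp (((θ / 2 + m * Real.pi / j : ℝ) : ℂ) * Complex.I)) ^ j =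
        (-1) ^ m * Complex.exp (((j * (θ / 2) : ℝ) : ℂ) * Complex.I) := by
      rw [← Complex.exp_nat_mul]
      have h2 : ((j : ℂ) * (((θ / 2 + m * Real.pi / j : ℝ) : ℂ) * Complex.I)) =
          ((j * (θ / 2) : ℝ) : ℂ) * Complex.I + (m : ℂ) * ((Real.pi : ℂ) * Complex.I) := by
        have hr : (j : ℝ) * (θ / 2 + m * Real.pi / j) = j * (θ / 2) + m * Real.pi := by
          field_simp
        have : (((j : ℝ) * (θ / 2 + m * Real.pi / j) : ℝ) : ℂ) =
            ((j * (θ / 2) + m * Real.pi : ℝ) : ℂ) := by rw [hr]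
        push_cast at this ⊢
        linear_combination Complex.I * this
      rw [h2, Complex.exp_add, Complex.exp_nat_mul]
      rw [show ((Real.pi : ℂ) * Complex.I) = (Real.pi : ℂ) * Complex.I from rfl,
        Complex.exp_pi_mul_I]
      ring
    rw [hEj]
    push_cast
    ring
  set A : ℝ := (x₀.im / Real.sin (θ / 2 + k * Real.pi / j)) ^ j with hA
  set B : ℝ := (x₀.im / Real.sin (θ / 2 + k' * Real.pi / j)) ^ j with hB
  have hApos : 0 < A := hje.pow_pos (div_ne_zero hx hk)
  have hBpos : 0 < B := hje.pow_pos (div_ne_zero hx hk')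
  refine ⟨A / B, div_pos hApos hBpos, ?_⟩
  rw [pow_eq k hk, pow_eq k' hk']
  have hAB : ((A / B : ℝ) : ℂ) * (B : ℂ) = (A : ℂ) := by
    have hBne : ((B : ℝ) : ℂ) ≠ 0 := Complex.ofReal_ne_zero.mpr hBpos.ne'
    push_cast
    exact div_mul_cancel₀ _ hBne
  have hsign : ((-1 : ℂ)) ^ (k + k') * (-1) ^ k' = (-1) ^ k := by
    rw [← pow_add]
    have : k + k' + k' = k + 2 * k' := by ring
    rw [this, pow_add, pow_mul]
    norm_num
  calc ((A : ℝ) : ℂ) * (-1) ^ k * Complex.exp (((j * (θ / 2) : ℝ) : ℂ) * Complex.I)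
      = (-1) ^ (k + k') * ((A / B : ℝ) : ℂ) *
        (((B : ℝ) : ℂ) * (-1) ^ k' * Complex.exp (((j * (θ / 2) : ℝ) : ℂ) * Complex.I)) := by
        rw [show (-1 : ℂ) ^ (k + k') * ((A / B : ℝ) : ℂ) *
            (((B : ℝ) : ℂ) * (-1) ^ k' * Complex.exp (((j * (θ / 2) : ℝ) : ℂ) * Complex.I)) =
            (((A / B : ℝ) : ℂ) * (B : ℂ)) * ((-1 : ℂ) ^ (k + k') * (-1) ^ k') *
            Complex.exp (((j * (θ / 2) : ℝ) : ℂ) * Complex.I) from by ring, hAB, hsign]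
end

section
/- Let a ≥ 2 be an even natural number and let i ∈ ℂ denote the imaginary unit. Then the set {x ∈ ℝ : i·(x − i)^a is a positive real number} and the set {x ∈ ℝ : i·(x − i)^a is a negative real number} are both finite, and each has exactly a/2 elements. (Here 'i·(x − i)^a is a positive (resp. negative) real number' means that its imaginary part is 0 and its real part is > 0 (resp. < 0).) -/
open Complex Polynomial

private lemma aux_add_I_ne (x : ℝ) : (x : ℂ) + Complex.I ≠ 0 := by
  intro h
  have := congrArg Complex.im h
  simp at this

private lemma aux_sub_I_ne (x : ℝ) : (x : ℂ) - Complex.I ≠ 0 := by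
  intro h
  have := congrArg Complex.im h
  simp at this

/-- membership in T is equivalent to the algebraic equation -/
private lemma aux_T_iff (a : ℕ) (x : ℝ) :
    (Complex.I * ((x : ℂ) - Complex.I) ^ a).im = 0 ↔
      ((x : ℂ) - Complex.I) ^ a = -(((x : ℂ) + Complex.I) ^ a) := by
  rw [← Complex.conj_eq_iff_im]
  have hconj : (starRingEnd ℂ) (Complex.I * ((x : ℂ) - Complex.I) ^ a)
      = -Complex.I * ((x : ℂ) + Complex.I) ^ a := by
    rw [map_mul, map_pow, map_sub, Complex.conj_I, Complex.conj_ofReal, sub_neg_eq_add]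
  rw [hconj]
  constructor
  · intro h
    have := mul_left_cancel₀ Complex.I_ne_zero
      (show Complex.I * (-(((x:ℂ)+Complex.I) ^ a)) = Complex.I * (((x:ℂ)-Complex.I) ^ a) by
        rw [← h]; ring)
    exact this.symm
  · intro h; rw [h]; ring

/-- For an even `a ≥ 2`, the set of real `x` with `i·(x - i)^a` a positive real
number and the set of real `x` with `i·(x - i)^a` a negative real number are
both finite with exactly `a/2` elements each. -/
theorem count_real_solutions_even_power
    (a : ℕ) (ha : 2 ≤ a) (hae : Even a) :
    {x : ℝ | (Complex.I * ((x : ℂ) - Complex.I) ^ a).im = 0 ∧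
        0 < (Complex.I * ((x : ℂ) - Complex.I) ^ a).re}.Finite ∧
      {x : ℝ | (Complex.I * ((x : ℂ) - Complex.I) ^ a).im = 0 ∧
        (Complex.I * ((x : ℂ) - Complex.I) ^ a).re < 0}.Finite ∧
      {x : ℝ | (Complex.I * ((x : ℂ) - Complex.I) ^ a).im = 0 ∧
        0 < (Complex.I * ((x : ℂ) - Complex.I) ^ a).re}.ncard = a / 2 ∧
      {x : ℝ | (Complex.I * ((x : ℂ) - Complex.I) ^ a).im = 0 ∧
        (Complex.I * ((x : ℂ) - Complex.I) ^ a).re < 0}.ncard = a / 2 := by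
  have ha0 : a ≠ 0 := by omega
  have hapos : 0 < a := by omega
  have haC : (a : ℂ) ≠ 0 := Nat.cast_ne_zero.mpr ha0
  set Sp : Set ℝ := {x : ℝ | (Complex.I * ((x : ℂ) - Complex.I) ^ a).im = 0 ∧
        0 < (Complex.I * ((x : ℂ) - Complex.I) ^ a).re} with hSp
  set Sm : Set ℝ := {x : ℝ | (Complex.I * ((x : ℂ) - Complex.I) ^ a).im = 0 ∧
        (Complex.I * ((x : ℂ) - Complex.I) ^ a).re < 0} with hSm
  set T : Set ℝ := {x : ℝ | (Complex.I * ((x : ℂ) - Complex.I) ^ a).im = 0} with hT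
  set R : Set ℂ := {u : ℂ | u ^ a = -1} with hR
  set f : ℝ → ℂ := fun x => ((x : ℂ) - Complex.I) / ((x : ℂ) + Complex.I) with hf
  -- the value is never zero
  have hwne : ∀ x : ℝ, Complex.I * ((x : ℂ) - Complex.I) ^ a ≠ 0 := fun x =>
    mul_ne_zero Complex.I_ne_zero (pow_ne_zero _ (aux_sub_I_ne x))
  -- T is the preimage of R under f
  have hTpre : T = f ⁻¹' R := by
    ext x
    simp only [hT, hR, hf, Set.mem_setOf_eq, Set.mem_preimage]
    rw [aux_T_iff a x, div_pow, div_eq_iff (pow_ne_zero _ (aux_add_I_ne x))]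
    constructor <;> intro h <;> linear_combination h
  -- f is injective
  have hfinj : Function.Injective f := by
    intro x y hxy
    simp only [hf, div_eq_div_iff (aux_add_I_ne x) (aux_add_I_ne y)] at hxy
    have : (2 : ℂ) * Complex.I * x = 2 * Complex.I * y := by ring_nf at hxy ⊢; linear_combination hxy
    have hx : (x : ℂ) = y := by
      field_simp at this
      exact_mod_cast this
    exact_mod_cast hx
  -- R is the set of a-th roots of -1
  have hprim := Complex.isPrimitiveRoot_exp a ha0
  have hzeta : Complex.exp (Real.pi * Complex.I / a) ^ a = -1 := by
    rw [← Complex.exp_nat_mul, mul_div_cancel₀ _ haC, Complex.exp_pi_mul_I]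
  have hRfinset : R = ↑((nthRoots a (-1 : ℂ)).toFinset) := by
    ext u
    simp only [hR, Set.mem_setOf_eq, Finset.coe_sort_coe, Finset.mem_coe,
      Multiset.mem_toFinset, mem_nthRoots hapos]
  have hRfin : R.Finite := by rw [hRfinset]; exact (nthRoots a (-1 : ℂ)).toFinset.finite_toSet
  have hRcard : R.ncard = a := by
    rw [hRfinset, Set.ncard_coe_finset,
      Multiset.toFinset_card_of_nodup (hprim.nthRoots_nodup (by norm_num)),
      hprim.card_nthRoots, if_pos ⟨_, hzeta⟩]
  -- f maps T onto R
  have hfimg : f '' T = R := by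
    apply Set.Subset.antisymm
    · rintro _ ⟨x, hx, rfl⟩; rw [hTpre] at hx; exact hx
    · intro u hu
      have hu' : u ^ a = -1 := hu
      have hu1 : u ≠ 1 := by rintro rfl; rw [one_pow] at hu'; norm_num at hu'
      have h1u : (1 : ℂ) - u ≠ 0 := sub_ne_zero.mpr hu1.symm
      have hu0 : u ≠ 0 := by rintro rfl; rw [zero_pow ha0] at hu'; norm_num at hu'
      have habs : ‖u‖ = 1 := by
        have h1 : ‖u‖ ^ a = 1 := by
          rw [← norm_pow, hu']; simp
        rcases lt_trichotomy ‖u‖ 1 with h | h | h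
        · exact absurd h1 (ne_of_lt (pow_lt_one₀ (norm_nonneg u) h ha0))
        · exact h
        · exact absurd h1.symm (ne_of_lt (one_lt_pow₀ h ha0))
      have hcu : (starRingEnd ℂ) u = u⁻¹ := (Complex.inv_eq_conj habs).symm
      set z : ℂ := Complex.I * (1 + u) / (1 - u) with hz
      have h1u' : (1 : ℂ) - u⁻¹ ≠ 0 := by
        rw [Ne, sub_eq_zero]
        intro h
        exact hu1 (by rw [← inv_inv u, ← h, inv_one])
      have hzreal : (starRingEnd ℂ) z = z := by
        rw [hz, map_div₀, map_mul, map_add, map_one, map_sub, map_one, Complex.conj_I, hcu,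
          div_eq_div_iff h1u' h1u]
        field_simp
        ring
      set x : ℝ := z.re with hxdef
      have hzx : (x : ℂ) = z := Complex.conj_eq_iff_re.mp hzreal
      have hx' : (x : ℂ) * (1 - u) = Complex.I * (1 + u) := by
        rw [hzx, hz, div_mul_cancel₀ _ h1u]
      have hfx : f x = u := by
        simp only [hf]
        rw [div_eq_iff (aux_add_I_ne x)]
        linear_combination hx'
      refine ⟨x, ?_, hfx⟩
      rw [hTpre]
      simp only [Set.mem_preimage, hfx]
      exact hu
  have hTfin : T.Finite := by rw [hTpre]; exact hRfin.preimage hfinj.injOn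
  have hTcard : T.ncard = a := by
    rw [← hRcard, ← hfimg, Set.ncard_image_of_injective _ hfinj]
  -- negation swaps Sp and Sm
  have hneg : ∀ x : ℝ, Complex.I * (((-x : ℝ) : ℂ) - Complex.I) ^ a
      = -(starRingEnd ℂ) (Complex.I * ((x : ℂ) - Complex.I) ^ a) := by
    intro x
    rw [map_mul, map_pow, map_sub, Complex.conj_I, Complex.conj_ofReal, sub_neg_eq_add]
    have h2 : ((-x : ℝ) : ℂ) - Complex.I = -((x : ℂ) + Complex.I) := by push_cast; ring
    rw [h2, hae.neg_pow]
    ring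
  have hmem : ∀ x : ℝ, x ∈ Sp → -x ∈ Sm := by
    rintro x ⟨h1, h2⟩
    constructor
    · rw [hneg x]
      simp only [Complex.neg_im, Complex.conj_im, h1, neg_zero, neg_neg]
    · rw [hneg x]
      simp only [Complex.neg_re, Complex.conj_re]
      linarith
  have hmem' : ∀ x : ℝ, x ∈ Sm → -x ∈ Sp := by
    rintro x ⟨h1, h2⟩
    constructor
    · rw [hneg x]
      simp only [Complex.neg_im, Complex.conj_im, h1, neg_zero, neg_neg]
    · rw [hneg x]
      simp only [Complex.neg_re, Complex.conj_re]
      linarith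
  have himg : Neg.neg '' Sp = Sm := by
    apply Set.Subset.antisymm
    · rintro _ ⟨x, hx, rfl⟩; exact hmem x hx
    · intro y hy; exact ⟨-y, hmem' y hy, neg_neg y⟩
  have hunion : Sp ∪ Sm = T := by
    ext x
    simp only [hSp, hSm, hT, Set.mem_union, Set.mem_setOf_eq]
    constructor
    · rintro (⟨h, _⟩ | ⟨h, _⟩) <;> exact h
    · intro h
      rcases lt_trichotomy (Complex.I * ((x : ℂ) - Complex.I) ^ a).re 0 with hlt | heq | hgt
      · exact Or.inr ⟨h, hlt⟩
      · exact absurd (by apply Complex.ext <;> simp [heq, h]) (hwne x)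
      · exact Or.inl ⟨h, hgt⟩
  have hdisj : Disjoint Sp Sm := by
    rw [Set.disjoint_left]
    rintro x ⟨_, h2⟩ ⟨_, h4⟩
    exact absurd h2 (not_lt.mpr h4.le)
  have hSpfin : Sp.Finite := hTfin.subset (hunion ▸ Set.subset_union_left)
  have hSmfin : Sm.Finite := hTfin.subset (hunion ▸ Set.subset_union_right)
  have hcards : Sp.ncard + Sm.ncard = a := by
    rw [← Set.ncard_union_eq hdisj hSpfin hSmfin, hunion, hTcard]
  have hSpSm : Sm.ncard = Sp.ncard := by
    rw [← himg, Set.ncard_image_of_injective _ neg_injective]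
  obtain ⟨m, hm⟩ := hae
  exact ⟨hSpfin, hSmfin, by omega, by omega⟩
end

section
/- Let t₁, t₂ ∈ ℂ satisfy Im(t₁) ≠ 0, Im(t₂) ≠ 0, 1 + t₁² ≠ 0, 1 + t₂² ≠ 0, and t₂ ≠ conj(t₁). Then for all real numbers x, y satisfying the complex equation (1 − t₁t₂)·x + (t₁ + t₂)·y = 1 + t₁t₂, one has x² + y² < 1 if and only if Im(t₁)·Im(t₂) > 0. -/
set_option maxHeartbeats 1000000


/-- Affine version of Lemma 5.2: the real point of the non-real line through
`P(t₁)` and `P(t₂)` on the conic `x² + y² = 1` lies inside the real conic iff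
`t₁` and `t₂` lie in the same half-plane, i.e. `Im t₁ · Im t₂ > 0`. -/
theorem line_conic_interior
    (t₁ t₂ : ℂ) (h1 : t₁.im ≠ 0) (h2 : t₂.im ≠ 0)
    (h3 : 1 + t₁ ^ 2 ≠ 0) (h4 : 1 + t₂ ^ 2 ≠ 0)
    (h5 : t₂ ≠ (starRingEnd ℂ) t₁) :
    ∀ x y : ℝ, (1 - t₁ * t₂) * (x : ℂ) + (t₁ + t₂) * (y : ℂ) = 1 + t₁ * t₂ →
      (x ^ 2 + y ^ 2 < 1 ↔ 0 < t₁.im * t₂.im) := by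
  intro x y h
  have hx := congrArg Complex.re h
  have hy := congrArg Complex.im h
  simp only [Complex.add_re, Complex.add_im, Complex.sub_re, Complex.sub_im,
    Complex.mul_re, Complex.mul_im, Complex.one_re, Complex.one_im,
    Complex.ofReal_re, Complex.ofReal_im, mul_zero, zero_mul, sub_zero,
    zero_sub, add_zero, zero_add] at hx hy
  set a := t₁.re with ha'
  set b := t₁.im with hb'
  set c := t₂.re with hc'
  set d := t₂.im with hd'
  -- F := (1-b)^2 + a^2 is positive
  have hF : 0 < (1 - b) ^ 2 + a ^ 2 := by
    rcases lt_or_eq_of_le (by positivity : (0:ℝ) ≤ (1 - b) ^ 2 + a ^ 2) with hlt | heq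
    · exact hlt
    · exfalso
      have hb1 : b = 1 := by nlinarith [sq_nonneg (1 - b), sq_nonneg a]
      have ha0 : a = 0 := by nlinarith [sq_nonneg (1 - b), sq_nonneg a]
      apply h3
      have : t₁ = Complex.I := by
        apply Complex.ext <;> simp [← ha', ← hb', ha0, hb1]
      rw [this]
      simp [Complex.I_sq]
  -- key identity
  set N : ℝ := ((1 + d) * x + c * y - 1 + d) ^ 2 + ((1 + d) * y - c * x - c) ^ 2 with hN'
  have key : b * N = d * ((1 - b) ^ 2 + a ^ 2) * (1 - x ^ 2 - y ^ 2) := by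
    rw [hN']
    linear_combination (d + d*x - b + b*x + b*c*y + a*d*y) * hx +
      (y - c - c*x + b*d*y + a - a*x - a*c*y) * hy
  have hN0 : 0 ≤ N := by rw [hN']; positivity
  constructor
  · intro hlt
    rcases lt_trichotomy (b * d) 0 with hbd | hbd | hbd
    · exfalso
      have h6 : 0 < 1 - x ^ 2 - y ^ 2 := by linarith
      have h7 : b * (b * N) = (b * d) * (((1 - b) ^ 2 + a ^ 2) * (1 - x ^ 2 - y ^ 2)) := by
        rw [key]; ring
      nlinarith [sq_nonneg b, mul_pos hF h6, mul_nonneg (sq_nonneg b) hN0]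
    · exact absurd hbd (mul_ne_zero h1 h2)
    · exact hbd
  · intro hbd
    by_contra hge
    push_neg at hge
    have h7 : b * (b * N) = (b * d) * (((1 - b) ^ 2 + a ^ 2) * (1 - x ^ 2 - y ^ 2)) := by
      rw [key]; ring
    have h8 : 0 ≤ b ^ 2 * N := by positivity
    have h9 : (1 - x ^ 2 - y ^ 2) ≤ 0 := by linarith
    -- b^2 N ≥ 0 and b^2 N = (bd) F (1 - x² - y²) ≤ 0, so both are 0
    have hb2 : 0 < b ^ 2 := by positivity
    have hbF : 0 < b * d * ((1 - b) ^ 2 + a ^ 2) := mul_pos hbd hF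
    have hle : b ^ 2 * N ≤ 0 := by
      nlinarith [mul_nonpos_of_nonneg_of_nonpos hbF.le h9]
    have hNz : N = 0 := by
      rcases lt_or_eq_of_le hN0 with hp | hp
      · exfalso; nlinarith [mul_pos hb2 hp]
      · exact hp.symm
    have hdF : d * ((1 - b) ^ 2 + a ^ 2) ≠ 0 := mul_ne_zero h2 hF.ne'
    have hE : x ^ 2 + y ^ 2 = 1 := by
      have h0 : (d * ((1 - b) ^ 2 + a ^ 2)) * (1 - x ^ 2 - y ^ 2) = 0 := by
        rw [← key, hNz, mul_zero]
      have := (mul_eq_zero.mp h0).resolve_left hdF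
      linarith
    have hN2 : ((1 + d) * x + c * y - 1 + d) ^ 2 + ((1 + d) * y - c * x - c) ^ 2 = 0 := by
      rw [← hN', hNz]
    have hs1 : (1 + d) * x + c * y - 1 + d = 0 := by
      have h01 : ((1 + d) * x + c * y - 1 + d) ^ 2 = 0 :=
        le_antisymm (by linarith [hN2, sq_nonneg ((1 + d) * y - c * x - c)]) (sq_nonneg _)
      exact sq_eq_zero_iff.mp h01
    have hs2 : (1 + d) * y - c * x - c = 0 := by
      have h02 : ((1 + d) * y - c * x - c) ^ 2 = 0 :=
        le_antisymm (by linarith [hN2, sq_nonneg ((1 + d) * x + c * y - 1 + d)]) (sq_nonneg _)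
      exact sq_eq_zero_iff.mp h02
    apply h2
    show d = 0
    linear_combination (((1 + d) * x + c * y + 1 - d) / 4) * hs1 +
      (((1 + d) * y - c * x + c) / 4) * hs2 - (((1 + d) ^ 2 + c ^ 2) / 4) * hE
end
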